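/- Let 1 ≤ m ≤ n and let A be an n×n Hermitian matrix that is m-positive. Then there exists a complex linear subspace V ⊆ ℂ^n with dim_ℂ V = m such that the compression of A to V is positive definite. -/

import Mathlib

open Finset
open scoped ComplexOrder

noncomputable section

/-- The `k`-th elementary symmetric polynomial of a finite family of reals. -/
def esymmFin {N : ℕ} (k : ℕ) (lam : Fin N → ℝ) : ℝ :=
  ∑ s ∈ Finset.univ.powersetCard k, ∏ i ∈ s, lam i

/-- A square complex matrix is `m`-positive if it is Hermitian and the `k`-th elementary
symmetric function of its eigenvalues is positive for every `1 ≤ k ≤ m`. -/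
def MPositive {d : ℕ} (m : ℕ) (M : Matrix (Fin d) (Fin d) ℂ) : Prop :=
  ∃ hM : M.IsHermitian, ∀ k, 1 ≤ k → k ≤ m → 0 < esymmFin k hM.eigenvalues

/-- The matrix of the compression `P_H ∘ A|_H` of the Hermitian form of `A` to a subspace,
computed in an orthonormal family `b` spanning it: the entries are `⟪b i, A (b j)⟫`. -/
def compressionMatrix {n d : ℕ} (A : Matrix (Fin n) (Fin n) ℂ)
    (b : Fin d → EuclideanSpace ℂ (Fin n)) : Matrix (Fin d) (Fin d) ℂ :=
  fun i j => inner ℂ (b i) (Matrix.toEuclideanLin A (b j))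

/-- The compression of the Hermitian form of `A` to the subspace `H ⊆ ℂ^n` (the Hermitian
endomorphism `P_H ∘ A|_H` of `H`, `P_H` the orthogonal projection) is `m`-positive:
in every orthonormal basis of `H` its representing matrix is `m`-positive. -/
def CompressionMPositive {n : ℕ} (m : ℕ) (A : Matrix (Fin n) (Fin n) ℂ)
    (H : Submodule ℂ (EuclideanSpace ℂ (Fin n))) : Prop :=
  ∀ (d : ℕ) (b : Fin d → EuclideanSpace ℂ (Fin n)), Orthonormal ℂ b →
    (∀ i, b i ∈ H) → Submodule.span ℂ (Set.range b) = H →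
    MPositive m (compressionMatrix A b)

/-!
If `e₁, …, e_m` of a finite family of reals are positive, then at least `m` of its members are
positive: removing a member `a ≤ 0` keeps `e₁, …, e_m` positive, because
`e_{k+1}(a, s) = e_{k+1}(s) + a e_k(s)` with `a e_k(s) ≤ 0` inductively, and once only positive
members remain, `e_m > 0` forces there to be at least `m` of them.
The eigenvectors of `m` positive eigenvalues of `A` then span an `m`-dimensional subspace `V` on
which the Hermitian form of `A` is positive definite; hence so is the matrix of its compression
in any orthonormal basis of `V`, and a positive definite matrix is `m`-positive.
-/

namespace Multiset

theorem esymm_cons_succ {R : Type*} [CommSemiring R] (a : R) (s : Multiset R) (k : ℕ) :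
    (a ::ₘ s).esymm (k + 1) = s.esymm (k + 1) + a * s.esymm k := by
  simp only [esymm, powersetCard_cons, map_add, sum_add, map_map, Function.comp_def, prod_cons,
    sum_map_mul_left]

theorem le_card_of_esymm_ne_zero {R : Type*} [CommSemiring R] {s : Multiset R} {k : ℕ}
    (h : s.esymm k ≠ 0) : k ≤ card s := by
  by_contra! hk
  exact h (by simp [esymm, powersetCard_eq_empty k hk])

variable {R : Type*} [CommRing R] [LinearOrder R] [IsStrictOrderedRing R]

theorem esymm_pos_of_esymm_cons_pos {a : R} {s : Multiset R} {m : ℕ} (ha : a ≤ 0)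
    (h : ∀ k, 1 ≤ k → k ≤ m → 0 < (a ::ₘ s).esymm k) : ∀ k ≤ m, 0 < s.esymm k := by
  intro k
  induction k with
  | zero => simp [esymm]
  | succ k ih =>
    intro hk
    have hcons := h (k + 1) k.succ_pos hk
    rw [esymm_cons_succ] at hcons
    linarith [mul_nonpos_of_nonpos_of_nonneg ha (ih (by omega)).le]

theorem le_card_of_esymm_add_pos {p q : Multiset R} {m : ℕ} (hq : ∀ a ∈ q, a ≤ 0)
    (h : ∀ k, 1 ≤ k → k ≤ m → 0 < (q + p).esymm k) : m ≤ card p := by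
  induction q using Multiset.induction_on with
  | empty =>
    rcases m.eq_zero_or_pos with rfl | hm
    · exact Nat.zero_le _
    · simpa using le_card_of_esymm_ne_zero (h m hm le_rfl).ne'
  | cons a q ih =>
    rw [cons_add] at h
    exact ih (fun b hb => hq b (mem_cons_of_mem hb)) fun k _ hk =>
      esymm_pos_of_esymm_cons_pos (hq a (mem_cons_self a q)) h k hk

theorem le_card_filter_pos_of_esymm_pos {s : Multiset R} {m : ℕ}
    (h : ∀ k, 1 ≤ k → k ≤ m → 0 < s.esymm k) : m ≤ card (s.filter (0 < ·)) := by
  rw [← filter_add_not (fun a => 0 < a) s, add_comm] at h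
  exact le_card_of_esymm_add_pos (fun a ha => not_lt.1 (mem_filter.1 ha).2) h

end Multiset

theorem exists_embedding_pos_of_esymmFin_pos {N m : ℕ} {lam : Fin N → ℝ}
    (h : ∀ k, 1 ≤ k → k ≤ m → 0 < esymmFin k lam) :
    ∃ e : Fin m ↪ Fin N, ∀ j, 0 < lam (e j) := by
  have hcard : m ≤ #{i | 0 < lam i} := by
    have hfilter := Multiset.le_card_filter_pos_of_esymm_pos (s := univ.val.map lam)
      fun k hk hkm => by rw [esymm_map_val]; exact h k hk hkm
    rwa [Multiset.filter_map, Multiset.card_map] at hfilter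
  obtain ⟨S, hS, hScard⟩ := exists_subset_card_eq hcard
  exact ⟨(S.orderEmbOfFin hScard).toEmbedding, fun j =>
    (mem_filter.1 (hS (S.orderEmbOfFin_mem hScard j))).2⟩

theorem esymmFin_pos {N k : ℕ} {lam : Fin N → ℝ} (hlam : ∀ i, 0 < lam i) (hk : k ≤ N) :
    0 < esymmFin k lam :=
  sum_pos (fun s _ => prod_pos fun i _ => hlam i) (powersetCard_nonempty.2 (by simpa using hk))

theorem Matrix.PosDef.mPositive {d m : ℕ} {M : Matrix (Fin d) (Fin d) ℂ} (hM : M.PosDef)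
    (hm : m ≤ d) : MPositive m M :=
  ⟨hM.isHermitian, fun _ _ hk => esymmFin_pos hM.eigenvalues_pos (hk.trans hm)⟩

theorem re_inner_map_self_pos_of_mem_span_eigenvectors {𝕜 E ι : Type*} [RCLike 𝕜]
    [NormedAddCommGroup E] [InnerProductSpace 𝕜 E] [Fintype ι] {T : E →ₗ[𝕜] E} {v : ι → E}
    {μ : ι → ℝ} (hv : Orthonormal 𝕜 v) (hTv : ∀ i, T (v i) = (μ i : 𝕜) • v i)
    (hμ : ∀ i, 0 < μ i) {x : E} (hx : x ∈ Submodule.span 𝕜 (Set.range v)) (hx0 : x ≠ 0) :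
    0 < RCLike.re (inner 𝕜 x (T x)) := by
  obtain ⟨c, rfl⟩ := (Submodule.mem_span_range_iff_exists_fun 𝕜).1 hx
  obtain ⟨i, hi⟩ : ∃ i, c i ≠ 0 := by
    by_contra! hc
    simp [hc] at hx0
  have hquad : inner 𝕜 (∑ j, c j • v j) (T (∑ j, c j • v j)) =
      ∑ j, ((μ j * ‖c j‖ ^ 2 : ℝ) : 𝕜) := by
    simp only [map_sum, map_smul, hTv, smul_smul, inner_sum, inner_smul_right,
      hv.inner_left_fintype]
    refine sum_congr rfl fun j _ => ?_
    push_cast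
    rw [← RCLike.mul_conj]
    ring
  rw [hquad, ← RCLike.ofReal_sum, RCLike.ofReal_re]
  exact sum_pos' (fun j _ => mul_nonneg (hμ j).le (sq_nonneg _))
    ⟨i, mem_univ i, mul_pos (hμ i) (pow_pos (norm_pos_iff.2 hi) 2)⟩

theorem Matrix.IsHermitian.toEuclideanLin_eigenvectorBasis {𝕜 n : Type*} [RCLike 𝕜] [Fintype n]
    [DecidableEq n] {A : Matrix n n 𝕜} (hA : A.IsHermitian) (j : n) :
    Matrix.toEuclideanLin A (hA.eigenvectorBasis j) =
      (hA.eigenvalues j : 𝕜) • hA.eigenvectorBasis j := by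
  apply WithLp.ofLp_injective
  rw [Matrix.ofLp_toLpLin, Matrix.toLin'_apply, hA.mulVec_eigenvectorBasis, WithLp.ofLp_smul,
    RCLike.real_smul_eq_coe_smul (K := 𝕜)]

section Compression

open Matrix

variable {n d : ℕ} {A : Matrix (Fin n) (Fin n) ℂ}

theorem star_dotProduct_compressionMatrix_mulVec (b : Fin d → EuclideanSpace ℂ (Fin n))
    (x : Fin d → ℂ) :
    star x ⬝ᵥ (compressionMatrix A b *ᵥ x) =
      inner ℂ (∑ i, x i • b i) (toEuclideanLin A (∑ i, x i • b i)) := by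
  simp only [map_sum, map_smul, dotProduct, mulVec, compressionMatrix, sum_inner,
    inner_sum, inner_smul_left, inner_smul_right, Pi.star_apply, mul_sum, RCLike.star_def]
  rw [sum_comm]
  refine sum_congr rfl fun i _ => sum_congr rfl fun j _ => ?_
  ring

theorem isHermitian_compressionMatrix (hA : A.IsHermitian) (b : Fin d → EuclideanSpace ℂ (Fin n)) :
    (compressionMatrix A b).IsHermitian := by
  ext i j
  simp only [conjTranspose_apply, compressionMatrix, RCLike.star_def, inner_conj_symm]
  exact isSymmetric_toEuclideanLin_iff.2 hA (b i) (b j)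

theorem posDef_compressionMatrix {b : Fin d → EuclideanSpace ℂ (Fin n)} (hA : A.IsHermitian)
    (hb : LinearIndependent ℂ b)
    (hpos : ∀ x ∈ Submodule.span ℂ (Set.range b), x ≠ 0 →
      0 < (inner ℂ x (toEuclideanLin A x) : ℂ).re) :
    (compressionMatrix A b).PosDef := by
  refine .of_dotProduct_mulVec_pos (isHermitian_compressionMatrix hA b) fun x hx => ?_
  have hsum : ∑ i, x i • b i ≠ 0 := fun h => hx (funext (Fintype.linearIndependent_iff.1 hb x h))
  have hmem : ∑ i, x i • b i ∈ Submodule.span ℂ (Set.range b) :=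
    Submodule.sum_mem _ fun i _ => Submodule.smul_mem _ _ (Submodule.subset_span ⟨i, rfl⟩)
  rw [star_dotProduct_compressionMatrix_mulVec,
    ← (isSymmetric_toEuclideanLin_iff.2 hA).coe_re_inner_self_apply]
  exact Complex.zero_lt_real.2 (hpos _ hmem hsum)

end Compression

theorem stmt5_general (n m : ℕ) (A : Matrix (Fin n) (Fin n) ℂ) (hA : MPositive m A) :
    ∃ V : Submodule ℂ (EuclideanSpace ℂ (Fin n)), Module.finrank ℂ V = m ∧
      CompressionMPositive m A V ∧
      ∀ x : EuclideanSpace ℂ (Fin n), x ∈ V → x ≠ 0 →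
        0 < (inner ℂ x (Matrix.toEuclideanLin A x) : ℂ).re := by
  obtain ⟨hA, hesymm⟩ := hA
  obtain ⟨e, he⟩ := exists_embedding_pos_of_esymmFin_pos hesymm
  have hv : Orthonormal ℂ (hA.eigenvectorBasis ∘ e) :=
    hA.eigenvectorBasis.orthonormal.comp e e.injective
  set V := Submodule.span ℂ (Set.range (hA.eigenvectorBasis ∘ e))
  have hrank : Module.finrank ℂ V = m := by
    rw [finrank_span_eq_card hv.linearIndependent, Fintype.card_fin]
  have hpos : ∀ x ∈ V, x ≠ 0 → 0 < (inner ℂ x (Matrix.toEuclideanLin A x) : ℂ).re :=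
    fun x hx hx0 => re_inner_map_self_pos_of_mem_span_eigenvectors hv
      (fun j => hA.toEuclideanLin_eigenvectorBasis (e j)) he hx hx0
  refine ⟨V, hrank, fun d b hb _ hbV => ?_, hpos⟩
  have hd : d = m := by
    rw [← hrank, ← hbV, finrank_span_eq_card hb.linearIndependent, Fintype.card_fin]
  exact (posDef_compressionMatrix hA hb.linearIndependent (hbV ▸ hpos)).mPositive hd.ge

/-- Remark 2.3: if the Hermitian matrix `A` is `m`-positive (`1 ≤ m ≤ n`),
then there is an `m`-dimensional complex subspace `V ⊆ ℂ^n` on which the compression of `A`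
is positive definite (equivalently, `m`-positive on the `m`-dimensional space `V`, and
`⟪x, A x⟫ > 0` for every nonzero `x ∈ V`). -/
theorem stmt5 (n m : ℕ) (hm : 1 ≤ m) (hmn : m ≤ n)
    (A : Matrix (Fin n) (Fin n) ℂ) (hA : MPositive m A) :
    ∃ V : Submodule ℂ (EuclideanSpace ℂ (Fin n)), Module.finrank ℂ V = m ∧
      CompressionMPositive m A V ∧
      ∀ x : EuclideanSpace ℂ (Fin n), x ∈ V → x ≠ 0 →
        0 < (inner ℂ x (Matrix.toEuclideanLin A x) : ℂ).re :=
  stmt5_general n m A hA
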